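/- Let F be a finite family of pseudo-lines any two distinct members of which cross exactly once. Consider the set system 𝒮 on ground set F whose ranges are all sets of the form { f ∈ F : exactly one of f(x₁) > y₁ and f(x₂) > y₂ holds }, taken over all pairs of points (x₁, y₁), (x₂, y₂) ∈ ℝ² (i.e., the sets of pseudo-lines separating two points of the plane). Then the VC dimension of (F, 𝒮) — the largest cardinality of a subset Y ⊆ F such that every subset of Y equals Y ∩ S for some S ∈ 𝒮 — is less than 12·log₂ 6; in particular it is at most 31. -/

import Mathlib

noncomputable local instance : DecidableEq (ℝ → ℝ) := Classical.decEq _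

/-- `Prec f g` (written `f ≺ g`): the pseudo-lines `f` and `g` cross exactly once,
at a point `x₀` with `f x > g x` for all `x < x₀` and `f x < g x` for all `x > x₀`. -/
def Prec (f g : ℝ → ℝ) : Prop :=
  ∃ x₀ : ℝ, f x₀ = g x₀ ∧ (∀ x < x₀, g x < f x) ∧ (∀ x > x₀, f x < g x)

/-- Two pseudo-lines cross exactly once. -/
def CrossesOnce (f g : ℝ → ℝ) : Prop :=
  Prec f g ∨ Prec g f

/-! Let `n = #Y`. Between consecutive crossing points of members of `Y` (there are at most `n²`)
the vertical order of `Y` is constant. The members of `Y` above a point form an upper part of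
that order, strictly above the rest; moving the abscissa slightly to the right, off the
crossing points, keeps this, so such a set is determined by a cell of the crossing points and
its size: there are at most `(n² + 1)(n + 1)` of them. Every separating range is the symmetric
difference of two of them, so if `Y` is shattered then `2ⁿ ≤ ((n² + 1)(n + 1))²`, which fails
at `n = 32`. Shattering passes to subsets, hence `n ≤ 31 < 12 log₂ 6`. -/

open Finset Filter Topology
open scoped symmDiff

def IsCrossingPoint (f g : ℝ → ℝ) (t : ℝ) : Prop :=
  f t = g t ∧ ∀ x x', (x < t ∧ x' < t) ∨ (t < x ∧ t < x') → (g x < f x ↔ g x' < f x')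

lemma CrossesOnce.exists_isCrossingPoint {f g : ℝ → ℝ} (h : CrossesOnce f g) :
    ∃ t, IsCrossingPoint f g t := by
  rcases h with ⟨t, heq, hleft, hright⟩ | ⟨t, heq, hleft, hright⟩
  · refine ⟨t, heq, fun x x' hx => ?_⟩
    rcases hx with ⟨hx, hx'⟩ | ⟨hx, hx'⟩
    · exact iff_of_true (hleft x hx) (hleft x' hx')
    · exact iff_of_false (hright x hx).asymm (hright x' hx').asymm
  · refine ⟨t, heq.symm, fun x x' hx => ?_⟩
    rcases hx with ⟨hx, hx'⟩ | ⟨hx, hx'⟩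
    · exact iff_of_false (hleft x hx).asymm (hleft x' hx').asymm
    · exact iff_of_true (hright x hx) (hright x' hx')

def CrossingsIn (Y : Finset (ℝ → ℝ)) (X : Finset ℝ) : Prop :=
  ∀ f ∈ Y, ∀ g ∈ Y, f ≠ g → ∃ t ∈ X, IsCrossingPoint f g t

lemma exists_crossingsIn {Y : Finset (ℝ → ℝ)} (hY : (Y : Set (ℝ → ℝ)).Pairwise CrossesOnce) :
    ∃ X : Finset ℝ, #X ≤ #Y * #Y ∧ CrossingsIn Y X := by
  choose! t ht using fun f (hf : f ∈ Y) g (hg : g ∈ Y) hfg =>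
    (hY hf hg hfg).exists_isCrossingPoint
  exact ⟨(Y ×ˢ Y).image fun p => t p.1 p.2, card_image_le.trans (card_product Y Y).le,
    fun f hf g hg hfg =>
      ⟨t f g, mem_image.2 ⟨(f, g), mem_product.2 ⟨hf, hg⟩, rfl⟩, ht f hf g hg hfg⟩⟩

lemma Finset.exists_notMem_forall_lt_iff_le {α : Type*} [LinearOrder α] [TopologicalSpace α]
    [OrderTopology α] [DenselyOrdered α] [NoMaxOrder α] (X : Finset α) (x : α) :
    ∃ x' ∉ X, ∀ t ∈ X, t < x' ↔ t ≤ x := by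
  have : ∀ᶠ x' in 𝓝[>] x, ∀ t ∈ X, x' ≠ t ∧ (t < x' ↔ t ≤ x) := by
    refine (eventually_all_finset X).2 fun t _ => ?_
    rcases lt_or_ge x t with hxt | htx
    · filter_upwards [nhdsWithin_le_nhds (Iio_mem_nhds hxt)] with x' hx't
      exact ⟨hx't.ne, iff_of_false hx't.not_gt hxt.not_ge⟩
    · filter_upwards [self_mem_nhdsWithin] with x' hxx'
      exact ⟨(htx.trans_lt hxx').ne', iff_of_true (htx.trans_lt hxx') htx⟩
  obtain ⟨x', hx'⟩ := this.exists
  exact ⟨x', fun hmem => (hx' x' hmem).1 rfl, fun t ht => (hx' t ht).2⟩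

lemma Finset.filter_lt_eq_of_card_eq {α : Type*} [LinearOrder α] (X : Finset α) {a b : α}
    (h : #{t ∈ X | t < a} = #{t ∈ X | t < b}) : {t ∈ X | t < a} = {t ∈ X | t < b} := by
  wlog hab : a ≤ b generalizing a b
  · exact (this h.symm (le_of_not_ge hab)).symm
  exact eq_of_subset_of_card_le (monotone_filter_right X fun _ _ ht => ht.trans_le hab) h.ge

theorem Finset.eq_of_card_eq_of_forall_lt {α β : Type*} [Preorder β] {Y A B : Finset α}
    (v : α → β) (hA : A ⊆ Y) (hB : B ⊆ Y) (hAv : ∀ g ∈ A, ∀ f ∈ Y, f ∉ A → v f < v g)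
    (hBv : ∀ g ∈ B, ∀ f ∈ Y, f ∉ B → v f < v g) (hcard : #A = #B) : A = B := by
  by_contra hne
  obtain ⟨f, hfA, hfB⟩ := not_subset.1 fun h => hne (eq_of_subset_of_card_le h hcard.ge)
  obtain ⟨g, hgB, hgA⟩ := not_subset.1 fun h => hne (eq_of_subset_of_card_le h hcard.le).symm
  exact (hAv f hfA g (hB hgB) hgA).asymm (hBv g hgB f (hA hfA) hfB)

namespace CrossingsIn

variable {Y : Finset (ℝ → ℝ)} {X : Finset ℝ}

lemma lt_of_lt (hX : CrossingsIn Y X) {f g : ℝ → ℝ} (hf : f ∈ Y) (hg : g ∈ Y) {x x' : ℝ}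
    (hx' : x' ∉ X) (hside : ∀ t ∈ X, t ≠ x → (t < x ↔ t < x')) (hlt : g x < f x) :
    g x' < f x' := by
  obtain ⟨t, htX, heq, hconst⟩ := hX f hf g hg (by rintro rfl; exact hlt.false)
  have htx : t ≠ x := by rintro rfl; exact hlt.ne' heq
  have htx' : t ≠ x' := by rintro rfl; exact hx' htX
  refine (hconst x x' ?_).1 hlt
  rcases htx.lt_or_gt with h | h
  · exact Or.inr ⟨h, (hside t htX htx).1 h⟩
  · exact Or.inl ⟨h, htx'.symm.lt_of_le (not_lt.1 fun h' => h.not_gt ((hside t htX htx).2 h'))⟩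

lemma lt_iff_lt_of_card_eq (hX : CrossingsIn Y X) {f g : ℝ → ℝ} (hf : f ∈ Y) (hg : g ∈ Y)
    {x x' : ℝ} (hx : x ∉ X) (hx' : x' ∉ X) (h : #{t ∈ X | t < x} = #{t ∈ X | t < x'}) :
    g x < f x ↔ g x' < f x' := by
  have hside : ∀ t ∈ X, t < x ↔ t < x' := fun t ht => by
    simpa [ht] using Finset.ext_iff.1 (X.filter_lt_eq_of_card_eq h) t
  exact ⟨hX.lt_of_lt hf hg hx' fun t ht _ => hside t ht,
    hX.lt_of_lt hf hg hx fun t ht _ => (hside t ht).symm⟩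

lemma exists_notMem_forall_lt (hX : CrossingsIn Y X) (x y : ℝ) :
    ∃ x' ∉ X, ∀ g ∈ {f ∈ Y | y < f x}, ∀ f ∈ Y, f ∉ {f ∈ Y | y < f x} → f x' < g x' := by
  obtain ⟨x', hx', hside⟩ := X.exists_notMem_forall_lt_iff_le x
  refine ⟨x', hx', fun g hg f hf hfg => ?_⟩
  rw [mem_filter] at hg hfg
  refine hX.lt_of_lt hg.1 hf hx' (fun t ht htx => ?_) ((not_lt.1 (hfg ⟨hf, ·⟩)).trans_lt hg.2)
  rw [hside t ht, le_iff_lt_or_eq, or_iff_left htx]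

lemma eq_of_card_eq (hX : CrossingsIn Y X) {A B : Finset (ℝ → ℝ)} (hA : A ⊆ Y) (hB : B ⊆ Y)
    {a b : ℝ} (ha : a ∉ X) (hb : b ∉ X) (hAa : ∀ g ∈ A, ∀ f ∈ Y, f ∉ A → f a < g a)
    (hBb : ∀ g ∈ B, ∀ f ∈ Y, f ∉ B → f b < g b) (hab : #{t ∈ X | t < a} = #{t ∈ X | t < b})
    (hcard : #A = #B) : A = B :=
  eq_of_card_eq_of_forall_lt (fun f => f a) hA hB hAa
    (fun g hg f hf hfB => (hX.lt_iff_lt_of_card_eq (hB hg) hf ha hb hab).2 (hBb g hg f hf hfB))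
    hcard

end CrossingsIn

lemma exists_card_le_forall_filter_lt_mem {Y : Finset (ℝ → ℝ)}
    (hY : (Y : Set (ℝ → ℝ)).Pairwise CrossesOnce) :
    ∃ 𝒜 : Finset (Finset (ℝ → ℝ)), #𝒜 ≤ (#Y * #Y + 1) * (#Y + 1) ∧
      ∀ x y : ℝ, {f ∈ Y | y < f x} ∈ 𝒜 := by
  classical
  obtain ⟨X, hXcard, hX⟩ := exists_crossingsIn hY
  let 𝒜 := Y.powerset.filter fun A => ∃ x' ∉ X, ∀ g ∈ A, ∀ f ∈ Y, f ∉ A → f x' < g x'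
  refine ⟨𝒜, ?_, fun x y => mem_filter.2 ⟨mem_powerset.2 (filter_subset _ _),
    hX.exists_notMem_forall_lt x y⟩⟩
  choose! x' hx' hx'A using fun A (hA : A ∈ 𝒜) => (mem_filter.1 hA).2
  have hmaps : Set.MapsTo (fun A => (#{t ∈ X | t < x' A}, #A)) 𝒜
      ↑(range (#X + 1) ×ˢ range (#Y + 1)) := fun A hA =>
    mem_product.2 ⟨mem_range_succ_iff.2 (card_filter_le _ _),
      mem_range_succ_iff.2 (card_le_card (mem_powerset.1 (mem_filter.1 hA).1))⟩
  have hinj : Set.InjOn (fun A => (#{t ∈ X | t < x' A}, #A)) 𝒜 := fun A hA B hB hAB =>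
    hX.eq_of_card_eq (mem_powerset.1 (mem_filter.1 hA).1) (mem_powerset.1 (mem_filter.1 hB).1)
      (hx' A hA) (hx' B hB) (hx'A A hA) (hx'A B hB) (congrArg Prod.fst hAB)
      (congrArg Prod.snd hAB)
  calc #𝒜 ≤ #(range (#X + 1) ×ˢ range (#Y + 1)) := card_le_card_of_injOn _ hmaps hinj
    _ = (#X + 1) * (#Y + 1) := by rw [card_product, card_range, card_range]
    _ ≤ (#Y * #Y + 1) * (#Y + 1) := by gcongr

def SeparatorsShatter (Y : Finset (ℝ → ℝ)) : Prop :=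
  ∀ Z ⊆ Y, ∃ x₁ y₁ x₂ y₂ : ℝ, {f ∈ Y | Xor (y₁ < f x₁) (y₂ < f x₂)} = Z

namespace SeparatorsShatter

variable {Y : Finset (ℝ → ℝ)}

lemma mono {Y' : Finset (ℝ → ℝ)} (hY : SeparatorsShatter Y) (hY'Y : Y' ⊆ Y) :
    SeparatorsShatter Y' := fun Z hZ => by
  obtain ⟨x₁, y₁, x₂, y₂, h⟩ := hY Z (hZ.trans hY'Y)
  refine ⟨x₁, y₁, x₂, y₂, ?_⟩
  rw [← inter_eq_left.2 hY'Y, ← inter_filter, h, inter_eq_right.2 hZ]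

lemma two_pow_card_le (hY : SeparatorsShatter Y)
    (hcross : (Y : Set (ℝ → ℝ)).Pairwise CrossesOnce) :
    2 ^ #Y ≤ ((#Y * #Y + 1) * (#Y + 1)) ^ 2 := by
  obtain ⟨𝒜, h𝒜, hmem⟩ := exists_card_le_forall_filter_lt_mem hcross
  have hsurj : Set.SurjOn (fun p : Finset (ℝ → ℝ) × Finset (ℝ → ℝ) => p.1 ∆ p.2)
      ↑(𝒜 ×ˢ 𝒜) ↑Y.powerset := by
    intro Z hZ
    obtain ⟨x₁, y₁, x₂, y₂, h⟩ := hY Z (mem_powerset.1 hZ)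
    refine ⟨({f ∈ Y | y₁ < f x₁}, {f ∈ Y | y₂ < f x₂}), mem_product.2 ⟨hmem _ _, hmem _ _⟩, ?_⟩
    rw [← h]
    ext f
    simp only [mem_symmDiff, mem_filter, xor_def]
    tauto
  calc 2 ^ #Y = #Y.powerset := (card_powerset Y).symm
    _ ≤ #(𝒜 ×ˢ 𝒜) := card_le_card_of_surjOn _ hsurj
    _ = #𝒜 ^ 2 := by rw [card_product, sq]
    _ ≤ ((#Y * #Y + 1) * (#Y + 1)) ^ 2 := by gcongr

end SeparatorsShatter

lemma thirty_one_lt_twelve_mul_logb_two_six : (31 : ℝ) < 12 * Real.logb 2 6 := by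
  have h : Real.logb 2 (2 ^ 31) < Real.logb 2 (6 ^ 12) :=
    Real.logb_lt_logb (by norm_num) (by norm_num) (by norm_num)
  simpa [Real.logb_pow] using h

theorem vc_dim_separating_ranges_general
    (F : Finset (ℝ → ℝ))
    (hcross : ∀ f ∈ F, ∀ g ∈ F, f ≠ g → CrossesOnce f g) :
    ∀ Y : Finset (ℝ → ℝ), Y ⊆ F →
      (∀ Z ⊆ Y, ∃ x₁ y₁ x₂ y₂ : ℝ,
        Y ∩ F.filter (fun f =>
          (y₁ < f x₁ ∧ ¬ y₂ < f x₂) ∨ (y₂ < f x₂ ∧ ¬ y₁ < f x₁)) = Z) →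
      (Y.card : ℝ) < 12 * Real.logb 2 6 ∧ Y.card ≤ 31 := by
  intro Y hYF hsh
  have hY : SeparatorsShatter Y := fun Z hZ => by
    obtain ⟨x₁, y₁, x₂, y₂, h⟩ := hsh Z hZ
    exact ⟨x₁, y₁, x₂, y₂, by rwa [inter_filter, inter_eq_left.2 hYF] at h⟩
  have hcard : #Y ≤ 31 := by
    by_contra! h
    obtain ⟨Y', hY'Y, hY'⟩ := exists_subset_card_eq (show 32 ≤ #Y from h)
    have := (hY.mono hY'Y).two_pow_card_le
      (Set.Pairwise.mono (coe_subset.2 (hY'Y.trans hYF)) hcross)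
    rw [hY'] at this
    norm_num at this
  exact ⟨(Nat.cast_le.2 hcard).trans_lt (mod_cast thirty_one_lt_twelve_mul_logb_two_six),
    hcard⟩

/-- The VC dimension of the range space on a pairwise-crossing family of
pseudo-lines whose ranges are the sets of pseudo-lines separating two points of
the plane is less than `12·log₂ 6`; in particular it is at most `31`. -/
theorem vc_dim_separating_ranges
    (F : Finset (ℝ → ℝ))
    (hcont : ∀ f ∈ F, Continuous f)
    (hcross : ∀ f ∈ F, ∀ g ∈ F, f ≠ g → CrossesOnce f g) :
    ∀ Y : Finset (ℝ → ℝ), Y ⊆ F →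
      (∀ Z ⊆ Y, ∃ x₁ y₁ x₂ y₂ : ℝ,
        Y ∩ F.filter (fun f =>
          (y₁ < f x₁ ∧ ¬ y₂ < f x₂) ∨ (y₂ < f x₂ ∧ ¬ y₁ < f x₁)) = Z) →
      (Y.card : ℝ) < 12 * Real.logb 2 6 ∧ Y.card ≤ 31 :=
  vc_dim_separating_ranges_general F hcross
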